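/- Let k ≥ 1, let 0 ≤ τ < 1, and let D_1 and P be probability distributions on {1,...,k} with P(i) ≥ (1−τ)·D_1(i) for every i. Apply the granularising algorithm to the probability vector of P (with n := k) to obtain b_1,...,b_{k+1}, and let E be the probability distribution on {1,...,k+1} with E(j) = b_j/(8k). Let S be a finite nonempty set, D̂ a probability distribution on S, F any type, and X, W : {1,...,k} × S → F. Then d_{E × D̂}(g^cat(X), g^cat(W)) ≥ ((1−τ)/2) · d_{D_1 × D̂}(X, W). -/

import Mathlib

/-- Distance between two functions along a distribution `D` on a finite index set:
`d_D(x,y) = ∑_{i : x i ≠ y i} D i`. -/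
noncomputable def dDist {α β : Type*} [Fintype α] (D : α → ℝ) (x y : α → β) : ℝ :=
  letI := Classical.decEq β
  ∑ i, if x i = y i then 0 else D i

/-- The last granularity output by the granularising algorithm: `b_{k+1} = 8k − ∑ᵢ bᵢ`. -/
def lastGrain {k : ℕ} (b : Fin k → ℕ) : ℕ := 8 * k - ∑ i, b i

/-- The `8k`-grained distribution `E` on `{1,...,k+1}` defined by the granularities:
`E(j) = b j / (8k)`. -/
noncomputable def granDist {k : ℕ} (b : Fin k → ℕ) : Fin (k + 1) → ℝ :=
  Fin.snoc (fun i => (b i : ℝ) / (8 * k)) ((lastGrain b : ℝ) / (8 * k))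

/-- `g^cat(X)` agrees with `X` on rows `1,...,k` and its row `k+1` is identically `0`. -/
def gcatZ {k : ℕ} {S F : Type*} [Zero F] (X : Fin k × S → F) : Fin (k + 1) × S → F :=
  fun q => (Fin.snoc (fun i (s : S) => X (i, s)) (fun _ => (0 : F)) : Fin (k + 1) → S → F)
    q.1 q.2

/-!
Appending the row `k+1` on which `g^cat(X)` and `g^cat(W)` agree does not change the distance,
so it suffices to compare the weights row by row. The granularising algorithm rounds `6k·P(i)`
down and adds `2`, so `E(i) = b_i / (8k) ≥ (3/4)·P(i) ≥ (3/4)(1−τ)·D₁(i)`, which dominates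
`((1−τ)/2)·D₁(i)`.
-/

lemma mul_dDist {α β : Type*} [Fintype α] (c : ℝ) (D : α → ℝ) (x y : α → β) :
    c * dDist D x y = dDist (fun i => c * D i) x y := by
  unfold dDist
  rw [Finset.mul_sum]
  congr! 1 with i
  split_ifs <;> simp

lemma dDist_mono {α β : Type*} [Fintype α] {D D' : α → ℝ} (h : ∀ i, D i ≤ D' i)
    (x y : α → β) : dDist D x y ≤ dDist D' x y := by
  unfold dDist
  gcongr with i
  split_ifs
  exacts [le_rfl, h i]

@[simp]
lemma gcatZ_castSucc {k : ℕ} {S F : Type*} [Zero F] (X : Fin k × S → F) (i : Fin k) (s : S) :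
    gcatZ X (i.castSucc, s) = X (i, s) := by
  simp [gcatZ]

@[simp]
lemma gcatZ_last {k : ℕ} {S F : Type*} [Zero F] (X : Fin k × S → F) (s : S) :
    gcatZ X (Fin.last k, s) = 0 := by
  simp [gcatZ]

lemma dDist_gcatZ {k : ℕ} {S F : Type*} [Fintype S] [Zero F] (D : Fin (k + 1) × S → ℝ)
    (X W : Fin k × S → F) :
    dDist D (gcatZ X) (gcatZ W) = dDist (fun q : Fin k × S => D (q.1.castSucc, q.2)) X W := by
  classical
  unfold dDist
  rw [Fintype.sum_prod_type, Fin.sum_univ_castSucc, Fintype.sum_prod_type]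
  simp

lemma three_quarters_mul_le_granDist_castSucc {k : ℕ} (hk : 1 ≤ k) {P : Fin k → ℝ}
    {b : Fin k → ℕ} (hb : ∀ i, b i = ⌊(6 * (k : ℝ)) * P i⌋₊ + 2) (i : Fin k) :
    3 / 4 * P i ≤ granDist b i.castSucc := by
  have hk8 : (0 : ℝ) < 8 * k := by positivity
  have hbi : 6 * (k : ℝ) * P i ≤ b i := by
    rw [hb i]
    push_cast
    linarith [Nat.lt_floor_add_one (6 * (k : ℝ) * P i)]
  rw [granDist, Fin.snoc_castSucc, le_div_iff₀ hk8]
  linarith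

theorem gcat_granularise_lower_bound_general {k : ℕ} (hk : 1 ≤ k)
    (τ : ℝ) (hτ1 : τ < 1)
    (D₁ P : Fin k → ℝ)
    (hD₁0 : ∀ i, 0 ≤ D₁ i)
    (hPD : ∀ i, (1 - τ) * D₁ i ≤ P i)
    (b : Fin k → ℕ) (hb : ∀ i, b i = ⌊(6 * (k : ℝ)) * P i⌋₊ + 2)
    {S : Type*} [Fintype S] {F : Type*} [Zero F]
    (Dhat : S → ℝ) (hDhat0 : ∀ s, 0 ≤ Dhat s)
    (X W : Fin k × S → F) :
    ((1 - τ) / 2) * dDist (fun q : Fin k × S => D₁ q.1 * Dhat q.2) X W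
      ≤ dDist (fun q : Fin (k + 1) × S => granDist b q.1 * Dhat q.2)
          (gcatZ X) (gcatZ W) := by
  have hrow : ∀ i, (1 - τ) / 2 * D₁ i ≤ granDist b i.castSucc := fun i => by
    have := mul_nonneg (sub_nonneg.2 hτ1.le) (hD₁0 i)
    linarith [hPD i, three_quarters_mul_le_granDist_castSucc hk hb i]
  rw [mul_dDist, dDist_gcatZ]
  refine dDist_mono (fun q => ?_) X W
  rw [← mul_assoc]
  exact mul_le_mul_of_nonneg_right (hrow q.1) (hDhat0 q.2)

/-- If `P(i) ≥ (1−τ)·D₁(i)` for all `i` and `E` is the granularisation of `P`, then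
`d_{E × D̂}(g^cat(X), g^cat(W)) ≥ ((1−τ)/2) · d_{D₁ × D̂}(X, W)`. -/
theorem gcat_granularise_lower_bound {k : ℕ} (hk : 1 ≤ k)
    (τ : ℝ) (hτ0 : 0 ≤ τ) (hτ1 : τ < 1)
    (D₁ P : Fin k → ℝ)
    (hD₁0 : ∀ i, 0 ≤ D₁ i) (hD₁1 : ∑ i, D₁ i = 1)
    (hP0 : ∀ i, 0 ≤ P i) (hP1 : ∑ i, P i = 1)
    (hPD : ∀ i, (1 - τ) * D₁ i ≤ P i)
    (b : Fin k → ℕ) (hb : ∀ i, b i = ⌊(6 * (k : ℝ)) * P i⌋₊ + 2)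
    {S : Type*} [Fintype S] [Nonempty S] {F : Type*} [Zero F]
    (Dhat : S → ℝ) (hDhat0 : ∀ s, 0 ≤ Dhat s) (hDhat1 : ∑ s, Dhat s = 1)
    (X W : Fin k × S → F) :
    ((1 - τ) / 2) * dDist (fun q : Fin k × S => D₁ q.1 * Dhat q.2) X W
      ≤ dDist (fun q : Fin (k + 1) × S => granDist b q.1 * Dhat q.2)
          (gcatZ X) (gcatZ W) :=
  gcat_granularise_lower_bound_general hk τ hτ1 D₁ P hD₁0 hPD b hb Dhat hDhat0 X W
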